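/- arXiv:1808.06123 — 3 statements merged into one kernel-verified Lean document; each statement's English description precedes it below -/
import Mathlib

section
/- Let M > 1 be real and define g(z) = z·(z² + M²)^{−1/2} using the principal branch of the square root (which is well-defined and holomorphic on the strip |Im z| < M since Re(z²+M²) > 0 there). Then for every real τ: Im g(τ + i) = ∫₀¹ M² · Re( ((τ + i·s)² + M²)^{−3/2} ) ds; in particular Im g(τ+i) > 0 for all real τ. -/
open Complex intervalIntegral

/-!
With `g z = z (z² + M²)^{-1/2}` one has `g' z = M² (z² + M²)^{-3/2}`, and `g τ` is real, so
the identity is the fundamental theorem of calculus for `s ↦ Im g(τ + i s)` on `[0, 1]`.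

Positivity does not follow from the integrand, which can be negative when `M` is close to `1`.
Instead, with `v = (z² + M²)^{1/2}` (so `Re v > 0`) and `z = τ + i`, one has
`Im g z = (Re v - τ Im v) / |v|²`; comparing real and imaginary parts of `v² = z² + M²` gives
`τ = Re v Im v` and `(Im v)² < 1`, so the numerator is `Re v (1 - (Im v)²) > 0`.
-/

namespace Complex

lemma re_sq_add_ofReal_pos {z : ℂ} {a : ℝ} (h : z.im ^ 2 < a) :
    0 < (z ^ 2 + (a : ℂ)).re := by
  simp only [add_re, ofReal_re, sq, mul_re]
  nlinarith [mul_self_nonneg z.re]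

lemma hasDerivAt_mul_cpow_neg_half {c z : ℂ} (hz : z ^ 2 + c ∈ slitPlane) :
    HasDerivAt (fun z : ℂ => z * (z ^ 2 + c) ^ (-(1/2) : ℂ))
      (c * (z ^ 2 + c) ^ (-(3/2) : ℂ)) z := by
  have hpow : HasDerivAt (fun z : ℂ => (z ^ 2 + c) ^ (-(1/2) : ℂ))
      ((-(1/2) : ℂ) * (z ^ 2 + c) ^ (-(3/2) : ℂ) * (2 * z)) z := by
    convert ((hasDerivAt_pow 2 z).add_const c).cpow_const (c := -(1/2)) hz using 2 <;> norm_num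
  have hsplit : (z ^ 2 + c) ^ (-(1/2) : ℂ) = (z ^ 2 + c) * (z ^ 2 + c) ^ (-(3/2) : ℂ) := by
    nth_rw 2 [← cpow_one (z ^ 2 + c)]
    rw [← cpow_add _ _ (slitPlane_ne_zero hz)]
    norm_num
  refine ((hasDerivAt_id z).mul hpow).congr_deriv ?_
  rw [hsplit, id, one_mul]
  ring

-- Cauchy–Riemann: `d/ds Im f(τ + i s) = Re f'(τ + i s)`.
lemma im_sub_im_eq_integral_re_deriv {f f' : ℂ → ℂ} {τ a b : ℝ}
    (hf : ∀ s ∈ Set.uIcc a b, HasDerivAt f (f' (τ + I * s)) (τ + I * s))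
    (hint : IntervalIntegrable (fun s : ℝ => (f' (τ + I * s)).re) MeasureTheory.volume a b) :
    (f (τ + I * b)).im - (f (τ + I * a)).im = ∫ s in a..b, (f' (τ + I * s)).re := by
  refine (integral_eq_sub_of_hasDerivAt (f := fun s : ℝ => (f (τ + I * s)).im)
    (fun s hs => ?_) hint).symm
  have hline : HasDerivAt (fun s : ℝ => (τ : ℂ) + I * s) I s := by
    simpa using (((hasDerivAt_id (s : ℂ)).const_mul I).const_add (τ : ℂ)).comp_ofReal
  refine (imCLM.hasFDerivAt.comp_hasDerivAt s ((hf s hs).comp s hline)).congr_deriv ?_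
  simp

lemma im_mul_cpow_neg_half_pos {z : ℂ} {a : ℝ} (hy : 0 < z.im) (ha : z.im ^ 2 < a) :
    0 < (z * (z ^ 2 + (a : ℂ)) ^ (-(1/2) : ℂ)).im := by
  have hwre := re_sq_add_ofReal_pos ha
  set w := z ^ 2 + (a : ℂ)
  set v := w ^ (2⁻¹ : ℂ)
  have hv : v * v = w := by
    rw [← cpow_add _ _ (slitPlane_ne_zero (Or.inl hwre))]; norm_num
  have hp : 0 < v.re := by
    rw [cpow_inv_two_re]
    exact Real.sqrt_pos.mpr (by linarith [abs_le.mp (abs_re_le_norm w), hwre])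
  have hre : v.re ^ 2 - v.im ^ 2 = z.re ^ 2 - z.im ^ 2 + a := by
    simpa [w, sq, mul_re] using congrArg re hv
  have him : v.re * v.im = z.re * z.im := by
    have := congrArg im hv
    simp only [w, sq, mul_im, add_im, ofReal_im] at this
    linarith
  have hq : v.im ^ 2 < z.im ^ 2 := by
    have key : v.re ^ 2 * (z.im ^ 2 - v.im ^ 2) = z.im ^ 2 * (v.im ^ 2 + (a - z.im ^ 2)) := by
      linear_combination z.im ^ 2 * hre - (v.re * v.im + z.re * z.im) * him
    have : 0 < v.re ^ 2 * (z.im ^ 2 - v.im ^ 2) := by rw [key]; positivity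
    nlinarith [(mul_pos_iff_of_pos_left (pow_pos hp 2)).mp this]
  have hnum : 0 < z.im * v.re - z.re * v.im := by
    have key : z.im * (z.im * v.re - z.re * v.im) = v.re * (z.im ^ 2 - v.im ^ 2) := by
      linear_combination v.im * him
    exact (mul_pos_iff_of_pos_left hy).mp (key ▸ mul_pos hp (sub_pos.mpr hq))
  rw [show (-(1/2) : ℂ) = -2⁻¹ by norm_num, cpow_neg]
  have hv0 : 0 < normSq v := normSq_pos.mpr fun h => by simp [h] at hp
  rw [mul_im, inv_re, inv_im, show z.re * (-v.im / normSq v) + z.im * (v.re / normSq v) =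
    (z.im * v.re - z.re * v.im) / normSq v by ring]
  exact div_pos hnum hv0

lemma im_ofReal_mul_cpow_neg_half (x a : ℝ) (ha : 0 ≤ a) :
    ((x : ℂ) * ((x : ℂ) ^ 2 + (a : ℂ)) ^ (-(1/2) : ℂ)).im = 0 := by
  rw [← ofReal_pow, ← ofReal_add,
    show (-(1/2) : ℂ) = ((-(1/2) : ℝ) : ℂ) by push_cast; rfl,
    ← ofReal_cpow (by positivity), ← ofReal_mul, ofReal_im]

end Complex

/-- For `M > 1` and `g(z) = z(z²+M²)^{-1/2}` (principal branch), for every real `τ`: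
`Im g(τ+i) = ∫₀¹ M² Re(((τ+is)²+M²)^{-3/2}) ds`, and in particular `Im g(τ+i) > 0`. -/
theorem stmt_7 (M : ℝ) (hM : 1 < M) :
    ∀ τ : ℝ,
      ((((τ : ℂ) + Complex.I) *
          ((((τ : ℂ) + Complex.I) ^ 2 + (M : ℂ) ^ 2) ^ (-(1/2) : ℂ))).im =
        ∫ s in (0:ℝ)..1,
          M ^ 2 * ((((τ : ℂ) + Complex.I * s) ^ 2 + (M : ℂ) ^ 2) ^ (-(3/2) : ℂ)).re) ∧
      0 < (((τ : ℂ) + Complex.I) *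
          ((((τ : ℂ) + Complex.I) ^ 2 + (M : ℂ) ^ 2) ^ (-(1/2) : ℂ))).im := by
  intro τ
  have hM2 : (1 : ℝ) < M ^ 2 := by nlinarith
  have hslit : ∀ s ∈ Set.uIcc (0 : ℝ) 1,
      ((τ : ℂ) + I * s) ^ 2 + ((M ^ 2 : ℝ) : ℂ) ∈ slitPlane := fun s hs => by
    rw [Set.uIcc_of_le zero_le_one] at hs
    refine Or.inl (re_sq_add_ofReal_pos ?_)
    simp only [add_im, ofReal_im, mul_im, I_re, I_im, ofReal_re]
    nlinarith [hs.1, hs.2]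
  have hcont : ContinuousOn (fun s : ℝ => (((M ^ 2 : ℝ) : ℂ) *
      (((τ : ℂ) + I * s) ^ 2 + ((M ^ 2 : ℝ) : ℂ)) ^ (-(3/2) : ℂ)).re)
      (Set.uIcc 0 1) :=
    continuous_re.comp_continuousOn (continuousOn_const.mul
      ((by fun_prop : Continuous fun s : ℝ => ((τ : ℂ) + I * s) ^ 2 + ((M ^ 2 : ℝ) : ℂ))
        |>.continuousOn.cpow_const hslit))
  have hFTC := im_sub_im_eq_integral_re_deriv (τ := τ)
    (f' := fun z => ((M ^ 2 : ℝ) : ℂ) * (z ^ 2 + ((M ^ 2 : ℝ) : ℂ)) ^ (-(3/2) : ℂ))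
    (fun s hs => hasDerivAt_mul_cpow_neg_half (hslit s hs)) hcont.intervalIntegrable
  have hreal := im_ofReal_mul_cpow_neg_half τ (M ^ 2) (sq_nonneg M)
  have hpos := im_mul_cpow_neg_half_pos (z := τ + I) (a := M ^ 2) (by simp)
    (by simpa only [add_im, ofReal_im, I_im, zero_add, one_pow] using hM2)
  simp only [ofReal_zero, ofReal_one, mul_zero, mul_one, add_zero, re_ofReal_mul] at hFTC
  push_cast at hFTC hreal hpos
  rw [hreal, sub_zero] at hFTC
  exact ⟨hFTC, hpos⟩
end

section
/- Let X, Y be Hilbert spaces, Z a normed space, ι : X → Z a compact linear operator, and (T_n) a sequence of bounded linear operators X → Y converging in operator norm to a bounded operator T₀ which is injective. Suppose there is C > 0 such that for all n and all u ∈ X: ‖u‖_X ≤ C·(‖T_n u‖_Y + ‖ι u‖_Z), and also ‖u‖_X ≤ C·(‖T₀ u‖_Y + ‖ι u‖_Z). Then there exist N and C′ > 0 such that for all n ≥ N and all u ∈ X: ‖u‖_X ≤ C′·‖T_n u‖_Y. -/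
/-!
Write `S = (T₀, ι) : X → Y × Z`. The a priori estimate says `S` is bounded below, so for a
bounded sequence `uₖ` with `T₀ uₖ → 0`, compactness of `ι` makes `S uₖ` converge along a
subsequence, and then `uₖ` itself converges there (`S` is a closed embedding because `X` is
complete). Applied to unit vectors with `T₀ uₖ → 0`, the limit is a unit vector in the kernel
of `T₀`; injectivity thus makes `T₀` bounded below. Being bounded below is stable under small
perturbations in operator norm, which passes the bound to `Tₙ` for large `n`.
-/

open Filter Topology NNReal

namespace ContinuousLinearMap

section Perturbation

variable {𝕜 E F : Type*} [NontriviallyNormedField 𝕜] [NormedAddCommGroup E] [NormedSpace 𝕜 E]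
  [NormedAddCommGroup F] [NormedSpace 𝕜 F]

theorem eventually_antilipschitzWith_two_mul {φ₀ : E →L[𝕜] F} {K : ℝ≥0} (hK : 0 < K)
    (hφ₀ : AntilipschitzWith K φ₀) : ∀ᶠ φ : E →L[𝕜] F in 𝓝 φ₀, AntilipschitzWith (2 * K) φ := by
  filter_upwards [eventually_nnnorm_sub_lt φ₀ (inv_pos.2 (mul_pos two_pos hK))] with φ hφ
  have hsmall : ‖φ - φ₀‖ * (2 * K) ≤ 1 := by
    exact_mod_cast (le_inv_iff_mul_le (mul_pos two_pos hK).ne').1 hφ.le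
  refine antilipschitz_of_bound φ fun u => ?_
  have hφ₀u : ‖φ₀ u‖ ≤ ‖φ u‖ + ‖φ - φ₀‖ * ‖u‖ := calc
    ‖φ₀ u‖ = ‖φ u - (φ - φ₀) u‖ := by simp
    _ ≤ ‖φ u‖ + ‖(φ - φ₀) u‖ := norm_sub_le _ _
    _ ≤ ‖φ u‖ + ‖φ - φ₀‖ * ‖u‖ := by gcongr; exact le_opNorm _ _
  have hbelow := φ₀.bound_of_antilipschitz hφ₀ u
  push_cast
  nlinarith [norm_nonneg u]

end Perturbation

section CompactError

variable {𝕜 E F G : Type*} [RCLike 𝕜] [NormedAddCommGroup E] [NormedSpace 𝕜 E]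
  [NormedAddCommGroup F] [NormedSpace 𝕜 F] [NormedAddCommGroup G] [NormedSpace 𝕜 G]
  {T : E →L[𝕜] F} {ι : E →L[𝕜] G}

theorem antilipschitzWith_prod_of_norm_le_mul_add {C : ℝ}
    (hest : ∀ u, ‖u‖ ≤ C * (‖T u‖ + ‖ι u‖)) : AntilipschitzWith (2 * C.toNNReal) (T.prod ι) := by
  refine antilipschitz_of_bound _ fun u => ?_
  have hT : ‖T u‖ ≤ ‖(T.prod ι) u‖ := _root_.norm_fst_le ((T.prod ι) u)
  have hι : ‖ι u‖ ≤ ‖(T.prod ι) u‖ := _root_.norm_snd_le ((T.prod ι) u)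
  calc ‖u‖ ≤ C * (‖T u‖ + ‖ι u‖) := hest u
    _ ≤ C.toNNReal * (‖T u‖ + ‖ι u‖) := by gcongr; exact C.le_coe_toNNReal
    _ ≤ C.toNNReal * (2 * ‖(T.prod ι) u‖) := by gcongr; linarith
    _ = ↑(2 * C.toNNReal) * ‖(T.prod ι) u‖ := by push_cast; ring

theorem exists_tendsto_subseq_of_antilipschitzWith_prod [CompleteSpace E] {K : ℝ≥0}
    (hS : AntilipschitzWith K (T.prod ι)) (hι : IsCompactOperator ι) {x : ℕ → E} {R : ℝ}
    (hxR : ∀ k, ‖x k‖ ≤ R) (hTx : Tendsto (fun k => T (x k)) atTop (𝓝 0)) :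
    ∃ u₀, ∃ φ : ℕ → ℕ, StrictMono φ ∧ Tendsto (x ∘ φ) atTop (𝓝 u₀) := by
  obtain ⟨z, -, φ, hφ, hιx⟩ := (hι.isCompact_closure_image_closedBall (𝕜₁ := 𝕜) R).tendsto_subseq
    fun k => subset_closure (Set.mem_image_of_mem ι (mem_closedBall_zero_iff.2 (hxR k)))
  have hSx : Tendsto (fun k => T.prod ι (x (φ k))) atTop (𝓝 (0, z)) :=
    (hTx.comp hφ.tendsto_atTop).prodMk_nhds hιx
  have hemb := hS.isClosedEmbedding (T.prod ι).uniformContinuous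
  obtain ⟨u₀, hu₀⟩ :=
    hemb.isClosed_range.mem_of_tendsto hSx (Eventually.of_forall fun k => ⟨_, rfl⟩)
  refine ⟨u₀, φ, hφ, ?_⟩
  rw [hemb.tendsto_nhds_iff, hu₀]
  exact hSx

theorem exists_antilipschitzWith_of_injective_of_norm_le_mul_add [CompleteSpace E] {C : ℝ}
    (hι : IsCompactOperator ι) (hinj : Function.Injective T)
    (hest : ∀ u, ‖u‖ ≤ C * (‖T u‖ + ‖ι u‖)) : ∃ K > 0, AntilipschitzWith K T := by
  suffices ∃ c : ℝ, 0 < c ∧ ∀ x, ‖x‖ = 1 → c ≤ ‖T x‖ by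
    obtain ⟨c, hc, hbound⟩ := this
    refine ⟨c⁻¹.toNNReal, by simpa using hc, antilipschitz_of_bound_of_norm_one T fun x hx => ?_⟩
    rw [Real.coe_toNNReal _ (inv_nonneg.2 hc.le), ← div_eq_inv_mul, one_le_div hc]
    exact hbound x hx
  by_contra! h
  choose x hx1 hTx using fun k : ℕ => h (1 / ((k : ℝ) + 1)) (by positivity)
  have hTx0 : Tendsto (fun k => T (x k)) atTop (𝓝 0) :=
    squeeze_zero_norm (fun k => (hTx k).le) tendsto_one_div_add_atTop_nhds_zero_nat
  obtain ⟨u₀, φ, hφ, hxu₀⟩ := exists_tendsto_subseq_of_antilipschitzWith_prod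
    (antilipschitzWith_prod_of_norm_le_mul_add hest) hι (fun k => (hx1 k).le) hTx0
  have hnorm : ‖u₀‖ = 1 := tendsto_nhds_unique hxu₀.norm (by simp [hx1])
  have hTu₀ : T u₀ = T 0 := by
    rw [map_zero]
    exact tendsto_nhds_unique ((T.continuous.tendsto u₀).comp hxu₀) (hTx0.comp hφ.tendsto_atTop)
  simp [hinj hTu₀] at hnorm

end CompactError

end ContinuousLinearMap

theorem stmt_16_general {X Y Z : Type*}
    [NormedAddCommGroup X] [InnerProductSpace ℂ X] [CompleteSpace X]
    [NormedAddCommGroup Y] [InnerProductSpace ℂ Y]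
    [NormedAddCommGroup Z] [NormedSpace ℂ Z]
    (ι : X →L[ℂ] Z) (hι : IsCompactOperator ι)
    (T : ℕ → X →L[ℂ] Y) (T₀ : X →L[ℂ] Y)
    (hconv : Tendsto (fun n => T n) atTop (nhds T₀))
    (hinj : Function.Injective T₀)
    (C : ℝ)
    (hest₀ : ∀ u : X, ‖u‖ ≤ C * (‖T₀ u‖ + ‖ι u‖)) :
    ∃ N : ℕ, ∃ C' > (0 : ℝ), ∀ n ≥ N, ∀ u : X, ‖u‖ ≤ C' * ‖T n u‖ := by
  obtain ⟨K, hK, hT₀⟩ :=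
    T₀.exists_antilipschitzWith_of_injective_of_norm_le_mul_add hι hinj hest₀
  obtain ⟨N, hN⟩ := (hconv.eventually
    (ContinuousLinearMap.eventually_antilipschitzWith_two_mul hK hT₀)).exists_forall_of_atTop
  refine ⟨N, 2 * K, mul_pos two_pos (NNReal.coe_pos.2 hK), fun n hn u => ?_⟩
  exact_mod_cast (T n).bound_of_antilipschitz (hN n hn) u

/-- Abstract compactness argument removing the error term: Hilbert spaces `X, Y`, a
compact operator `ι : X → Z`, operators `Tₙ → T₀` in norm with `T₀` injective, and
uniform estimates `‖u‖ ≤ C(‖Tₙ u‖ + ‖ι u‖)` (also for `T₀`) give a uniform estimate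
`‖u‖ ≤ C′‖Tₙ u‖` for large `n`. -/
theorem stmt_16 {X Y Z : Type*}
    [NormedAddCommGroup X] [InnerProductSpace ℂ X] [CompleteSpace X]
    [NormedAddCommGroup Y] [InnerProductSpace ℂ Y] [CompleteSpace Y]
    [NormedAddCommGroup Z] [NormedSpace ℂ Z]
    (ι : X →L[ℂ] Z) (hι : IsCompactOperator ι)
    (T : ℕ → X →L[ℂ] Y) (T₀ : X →L[ℂ] Y)
    (hconv : Tendsto (fun n => T n) atTop (nhds T₀))
    (hinj : Function.Injective T₀)
    (C : ℝ) (hC : 0 < C)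
    (hest : ∀ n : ℕ, ∀ u : X, ‖u‖ ≤ C * (‖T n u‖ + ‖ι u‖))
    (hest₀ : ∀ u : X, ‖u‖ ≤ C * (‖T₀ u‖ + ‖ι u‖)) :
    ∃ N : ℕ, ∃ C' > (0 : ℝ), ∀ n ≥ N, ∀ u : X, ‖u‖ ≤ C' * ‖T n u‖ :=
  stmt_16_general ι hι T T₀ hconv hinj C hest₀
end

section
/- Let l be a nonzero real number and let u : (0,∞) → ℂ be continuously differentiable with compact support contained in (0,∞). Then ∫₀^∞ x^{−2l−1}·|u(x)|² dx ≤ (1/l²)·∫₀^∞ x^{−2l+1}·|u′(x)|² dx. -/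
/-!
Write `x ^ (-2l-1)` as `-(1/2l) (x ^ (-2l))'` and integrate by parts against `‖u‖²`, whose
derivative is `2⟪u, u'⟫`. As `u` is supported in a compact subset of `(0, ∞)` there are no
boundary terms, so `2l A = ∫ x ^ (-2l) 2⟪u, u'⟫` with `A = ∫ x ^ (-2l-1) ‖u‖²`. The pointwise
AM–GM bound `2 x ^ (-2l) ‖u‖ ‖u'‖ ≤ |l| x ^ (-2l-1) ‖u‖² + |l|⁻¹ x ^ (-2l+1) ‖u'‖²` turns this
into `2|l| A ≤ |l| A + |l|⁻¹ B`, i.e. `A ≤ B / l²`.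
-/

open MeasureTheory Real Set Filter Topology Function

lemma two_mul_rpow_mul_le {x m p q c : ℝ} (hx : 0 < x) (hm : 0 < m) :
    2 * (x ^ c * (p * q)) ≤ m * (x ^ (c - 1) * p ^ 2) + m⁻¹ * (x ^ (c + 1) * q ^ 2) := by
  rw [rpow_sub_one hx.ne', rpow_add_one hx.ne']
  have hxc : 0 < x ^ c := rpow_pos_of_pos hx c
  have hsq : 0 ≤ x ^ c * (m * p - x * q) ^ 2 / (m * x) := by positivity
  have hdiff : m * (x ^ c / x * p ^ 2) + m⁻¹ * (x ^ c * x * q ^ 2) - 2 * (x ^ c * (p * q))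
      = x ^ c * (m * p - x * q) ^ 2 / (m * x) := by
    field_simp
    ring
  linarith

lemma integrableOn_Ioi_rpow_mul {g : ℝ → ℝ} {K : Set ℝ} (hK : IsCompact K) (hK0 : K ⊆ Ioi 0)
    (hg : Continuous g) (hgK : support g ⊆ K) (c : ℝ) :
    IntegrableOn (fun x => x ^ c * g x) (Ioi 0) := by
  have hcont : ContinuousOn (fun x : ℝ => x ^ c * g x) (Ioi 0) :=
    (continuousOn_id.rpow_const fun x hx => Or.inl (ne_of_gt hx)).mul hg.continuousOn
  refine (hcont.mono hK0).integrableOn_compact hK |>.of_forall_sdiff_eq_zero measurableSet_Ioi ?_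
  exact fun x hx => notMem_support.1 fun h => hx.2 (hgK (support_mul_subset_right (· ^ c) g h))

lemma integral_Ioi_eq_zero_of_hasDerivAt {F F' : ℝ → ℝ} {a : ℝ}
    (hF : ∀ x ∈ Ioi a, HasDerivAt F (F' x) x) (hF' : IntegrableOn F' (Ioi a))
    (hc : HasCompactSupport F) (ha : a ∉ tsupport F) : ∫ x in Ioi a, F' x = 0 := by
  have hzero : F =ᶠ[𝓝 a] 0 := notMem_tsupport_iff_eventuallyEq.1 ha
  have hcont : ContinuousWithinAt F (Ici a) a :=
    (continuousAt_const.congr hzero.symm).continuousWithinAt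
  have hlim : Tendsto F atTop (𝓝 0) := hc.is_zero_at_infty.mono_left atTop_le_cocompact
  rw [integral_Ioi_of_hasDerivAt_of_tendsto hcont hF hF' hlim, hzero.eq_of_nhds, Pi.zero_apply,
    sub_zero]

variable {E : Type*} [NormedAddCommGroup E] [InnerProductSpace ℝ E]

lemma abs_rpow_mul_two_inner_le {x m c : ℝ} (hx : 0 < x) (hm : 0 < m) (v w : E) :
    |x ^ c * (2 * inner ℝ v w)| ≤ m * (x ^ (c - 1) * ‖v‖ ^ 2) + m⁻¹ * (x ^ (c + 1) * ‖w‖ ^ 2) :=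
  calc |x ^ c * (2 * inner ℝ v w)| = 2 * (x ^ c * |inner ℝ v w|) := by
        rw [abs_mul, abs_mul, abs_two, abs_of_pos (rpow_pos_of_pos hx c)]; ring
    _ ≤ 2 * (x ^ c * (‖v‖ * ‖w‖)) := by
        gcongr
        exact abs_real_inner_le_norm v w
    _ ≤ _ := two_mul_rpow_mul_le hx hm

section Hardy

variable {u : ℝ → E} (hu : ContDiff ℝ 1 u) (hsupp : HasCompactSupport u)
  (hsupp' : tsupport u ⊆ Ioi 0)
include hu hsupp hsupp'

lemma integrableOn_Ioi_rpow_mul_norm_sq (c : ℝ) :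
    IntegrableOn (fun x => x ^ c * ‖u x‖ ^ 2) (Ioi 0) :=
  integrableOn_Ioi_rpow_mul (g := fun x => ‖u x‖ ^ 2) hsupp.isCompact hsupp'
    (by have := hu.continuous; fun_prop) (fun x hx => subset_tsupport u (by simpa using hx)) c

lemma integrableOn_Ioi_rpow_mul_norm_deriv_sq (c : ℝ) :
    IntegrableOn (fun x => x ^ c * ‖deriv u x‖ ^ 2) (Ioi 0) :=
  integrableOn_Ioi_rpow_mul (g := fun x => ‖deriv u x‖ ^ 2) hsupp.isCompact hsupp'
    (by have := hu.continuous_deriv le_rfl; fun_prop)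
    (fun x hx => support_deriv_subset (by simpa using hx)) c

lemma integrableOn_Ioi_rpow_mul_two_inner_deriv (c : ℝ) :
    IntegrableOn (fun x => x ^ c * (2 * inner ℝ (u x) (deriv u x))) (Ioi 0) :=
  integrableOn_Ioi_rpow_mul (g := fun x => 2 * inner ℝ (u x) (deriv u x)) hsupp.isCompact hsupp'
    (by have := hu.continuous; have := hu.continuous_deriv le_rfl; fun_prop)
    (fun x hx => subset_tsupport u fun h => hx (by simp [h])) c

theorem integral_Ioi_rpow_mul_two_inner_deriv (c : ℝ) :
    ∫ x in Ioi 0, x ^ c * (2 * inner ℝ (u x) (deriv u x)) =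
      -c * ∫ x in Ioi 0, x ^ (c - 1) * ‖u x‖ ^ 2 := by
  have hderiv : ∀ x ∈ Ioi (0 : ℝ), HasDerivAt (fun x => x ^ c * ‖u x‖ ^ 2)
      (c * (x ^ (c - 1) * ‖u x‖ ^ 2) + x ^ c * (2 * inner ℝ (u x) (deriv u x))) x := fun x hx =>
    ((hasDerivAt_rpow_const (Or.inl (ne_of_gt hx))).fun_mul
      (hu.differentiable one_ne_zero x).hasDerivAt.norm_sq).congr_deriv (by ring)
  have hF : support (fun x => x ^ c * ‖u x‖ ^ 2) ⊆ tsupport u :=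
    (support_mul_subset_right _ _).trans fun x hx => subset_tsupport u (by simpa using hx)
  have hint₁ := (integrableOn_Ioi_rpow_mul_norm_sq hu hsupp hsupp' (c - 1)).const_mul c
  have hint₂ := integrableOn_Ioi_rpow_mul_two_inner_deriv hu hsupp hsupp' c
  have hzero := integral_Ioi_eq_zero_of_hasDerivAt hderiv (hint₁.add hint₂) (hsupp.mono' hF)
    fun h => self_notMem_Ioi (hsupp' (closure_minimal hF (isClosed_tsupport u) h))
  rw [integral_add hint₁ hint₂, integral_const_mul] at hzero
  linarith

theorem abs_integral_Ioi_rpow_mul_two_inner_deriv_le {m : ℝ} (hm : 0 < m) (c : ℝ) :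
    |∫ x in Ioi 0, x ^ c * (2 * inner ℝ (u x) (deriv u x))| ≤
      m * (∫ x in Ioi 0, x ^ (c - 1) * ‖u x‖ ^ 2) +
        m⁻¹ * ∫ x in Ioi 0, x ^ (c + 1) * ‖deriv u x‖ ^ 2 := by
  have hint₁ := (integrableOn_Ioi_rpow_mul_norm_sq hu hsupp hsupp' (c - 1)).const_mul m
  have hint₂ := (integrableOn_Ioi_rpow_mul_norm_deriv_sq hu hsupp hsupp' (c + 1)).const_mul m⁻¹
  calc |∫ x in Ioi 0, x ^ c * (2 * inner ℝ (u x) (deriv u x))|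
      ≤ ∫ x in Ioi 0, |x ^ c * (2 * inner ℝ (u x) (deriv u x))| := abs_integral_le_integral_abs
    _ ≤ ∫ x in Ioi 0, (m * (x ^ (c - 1) * ‖u x‖ ^ 2) + m⁻¹ * (x ^ (c + 1) * ‖deriv u x‖ ^ 2)) :=
        setIntegral_mono_on (integrableOn_Ioi_rpow_mul_two_inner_deriv hu hsupp hsupp' c).abs
          (hint₁.fun_add hint₂) measurableSet_Ioi fun x hx => abs_rpow_mul_two_inner_le hx hm _ _
    _ = _ := by rw [integral_add hint₁ hint₂, integral_const_mul, integral_const_mul]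

theorem hardy_inequality_Ioi {l : ℝ} (hl : l ≠ 0) :
    ∫ x in Ioi 0, x ^ (-2 * l - 1) * ‖u x‖ ^ 2 ≤
      1 / l ^ 2 * ∫ x in Ioi 0, x ^ (-2 * l + 1) * ‖deriv u x‖ ^ 2 := by
  set A := ∫ x in Ioi 0, x ^ (-2 * l - 1) * ‖u x‖ ^ 2
  set B := ∫ x in Ioi 0, x ^ (-2 * l + 1) * ‖deriv u x‖ ^ 2
  have hl' : 0 < |l| := abs_pos.2 hl
  have hA : 0 ≤ A := setIntegral_nonneg measurableSet_Ioi fun x hx => by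
    have : 0 ≤ x ^ (-2 * l - 1) := rpow_nonneg (le_of_lt hx) _
    positivity
  have hbound := abs_integral_Ioi_rpow_mul_two_inner_deriv_le hu hsupp hsupp' hl' (-2 * l)
  rw [integral_Ioi_rpow_mul_two_inner_deriv hu hsupp hsupp', abs_mul, abs_of_nonneg hA,
    show |-(-2 * l)| = 2 * |l| by simp [abs_mul]] at hbound
  have hkey : |l| * A ≤ |l|⁻¹ * B := by linarith
  calc A = |l|⁻¹ * (|l| * A) := by field_simp
    _ ≤ |l|⁻¹ * (|l|⁻¹ * B) := by gcongr
    _ = 1 / l ^ 2 * B := by rw [← mul_assoc, ← mul_inv, ← sq, sq_abs, one_div]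

end Hardy

/-- Weighted Hardy inequality in b-form: for `l ≠ 0` and `u : ℝ → ℂ` continuously
differentiable with compact support contained in `(0,∞)`,
`∫₀^∞ x^{−2l−1}|u|² dx ≤ (1/l²) ∫₀^∞ x^{−2l+1}|u′|² dx`. -/
theorem stmt_19 (l : ℝ) (hl : l ≠ 0) (u : ℝ → ℂ)
    (hu : ContDiff ℝ 1 u) (hsupp : HasCompactSupport u)
    (hsupp' : tsupport u ⊆ Set.Ioi 0) :
    ∫ x in Set.Ioi (0 : ℝ), x ^ (-2 * l - 1) * ‖u x‖ ^ 2 ≤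
      (1 / l ^ 2) * ∫ x in Set.Ioi (0 : ℝ), x ^ (-2 * l + 1) * ‖deriv u x‖ ^ 2 :=
  hardy_inequality_Ioi hu hsupp hsupp' hl
end
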